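/- arXiv:2203.07490 — 2 statements merged into one kernel-verified Lean document; each statement's English description precedes it below -/
import Mathlib

section
/- For univariate measures μ, ν on ℝ with μ nonatomic, the map T(x) = F_ν⁻¹(F_μ(x)) pushes μ forward to ν, i.e. T_#μ = ν. -/
/-!
Since μ has no atoms, `F_μ` is continuous, so each sublevel set `{F_μ ≤ c}` with `c < 1` is a
closed half-line `Iic s` with `F_μ s = c`; hence `F_μ` pushes `μ` forward to the uniform
distribution on `(0, 1)`. On `(0, 1)` the quantile function is the lower adjoint of `F_ν`,
`F_ν⁻¹ a ≤ t ↔ a ≤ F_ν t`, so it pushes the uniform distribution forward to `ν`.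
-/

open MeasureTheory Set Filter ProbabilityTheory
open scoped Topology

theorem Real.volume_Ioo_inter_Iic {c : ℝ} (hc : c ≤ 1) :
    volume (Ioo 0 1 ∩ Iic c) = ENNReal.ofReal c := by
  rw [measure_congr (Ioo_ae_eq_Ioc.inter (ae_eq_refl (Iic c)) : _ =ᵐ[volume] _), Ioc_inter_Iic,
    Real.volume_Ioc, min_eq_right hc, sub_zero]

namespace ProbabilityTheory

/-- Only the values on `(0, 1)` are meaningful: for `a ≤ 0` the set is `univ` and for `1 < a` it
is empty, so `sInf` returns the junk value `0`. -/
noncomputable def quantile (ν : Measure ℝ) (a : ℝ) : ℝ := sInf {τ | a ≤ cdf ν τ}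

section Quantile

variable (ν : Measure ℝ)

theorem quantile_le_iff {a : ℝ} (ha : a ∈ Ioo 0 1) (t : ℝ) :
    quantile ν a ≤ t ↔ a ≤ cdf ν t := by
  set S := {τ | a ≤ cdf ν τ}
  have hne : S.Nonempty := ((tendsto_cdf_atTop ν).eventually_const_le ha.2).exists
  have hbdd : BddBelow S := by
    obtain ⟨x₀, hx₀⟩ := eventually_atBot.1 ((tendsto_cdf_atBot ν).eventually_lt_const ha.1)
    exact ⟨x₀, fun τ hτ => le_of_not_gt fun hτx => (hx₀ τ hτx.le).not_ge hτ⟩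
  have hmem : a ≤ cdf ν (sInf S) := by
    refine ge_of_tendsto (((cdf ν).right_continuous _).mono Ioi_subset_Ici_self) ?_
    filter_upwards [self_mem_nhdsWithin] with x hx
    obtain ⟨τ, hτS, hτx⟩ := exists_lt_of_csInf_lt hne hx
    exact hτS.trans (monotone_cdf ν hτx.le)
  exact ⟨fun h => hmem.trans (monotone_cdf ν h), fun h => csInf_le hbdd h⟩

theorem monotoneOn_quantile : MonotoneOn (quantile ν) (Ioo 0 1) := fun _ ha _ hb hab =>
  (quantile_le_iff ν ha _).2 (hab.trans ((quantile_le_iff ν hb _).1 le_rfl))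

theorem aemeasurable_quantile_volume_Ioo :
    AEMeasurable (quantile ν) (volume.restrict (Ioo 0 1)) :=
  aemeasurable_restrict_of_monotoneOn measurableSet_Ioo (monotoneOn_quantile ν)

theorem map_quantile_volume_Ioo [IsProbabilityMeasure ν] :
    (volume.restrict (Ioo 0 1)).map (quantile ν) = ν := by
  refine (Measure.ext_of_Iic ν _ fun t => ?_).symm
  have hpre : quantile ν ⁻¹' Iic t ∩ Ioo 0 1 = Ioo 0 1 ∩ Iic (cdf ν t) := by
    ext a
    simp only [mem_inter_iff, mem_preimage, mem_Iic]
    exact ⟨fun ⟨h, ha⟩ => ⟨ha, (quantile_le_iff ν ha t).1 h⟩,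
      fun ⟨ha, h⟩ => ⟨(quantile_le_iff ν ha t).2 h, ha⟩⟩
  rw [Measure.map_apply_of_aemeasurable (aemeasurable_quantile_volume_Ioo ν) measurableSet_Iic,
    Measure.restrict_apply' measurableSet_Ioo, hpre, Real.volume_Ioo_inter_Iic (cdf_le_one ν t),
    ofReal_cdf]

end Quantile

section NullSingleton

variable (μ : Measure ℝ) [IsProbabilityMeasure μ] [NullSingletonClass μ]

theorem continuous_cdf : Continuous (cdf μ) := by
  refine continuous_iff_continuousAt.2 fun x =>
    (monotone_cdf μ).continuousAt_iff_leftLim_eq_rightLim.2 ?_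
  have h := (cdf μ).measure_singleton x
  rw [measure_cdf, measure_singleton, eq_comm, ENNReal.ofReal_eq_zero, sub_nonpos] at h
  rw [(cdf μ).rightLim_eq]
  exact le_antisymm ((monotone_cdf μ).leftLim_le le_rfl) h

theorem measure_cdf_le {c : ℝ} (hc : c < 1) :
    μ {x | cdf μ x ≤ c} = ENNReal.ofReal c := by
  set A := {x | cdf μ x ≤ c}
  rcases A.eq_empty_or_nonempty with hA | hA
  · have hc0 : c ≤ 0 := by
      refine ge_of_tendsto (tendsto_cdf_atBot μ) (Eventually.of_forall fun x => ?_)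
      exact le_of_not_ge fun h => (hA.subset h : x ∈ (∅ : Set ℝ))
    rw [hA, measure_empty, ENNReal.ofReal_of_nonpos hc0]
  have hbdd : BddAbove A := by
    obtain ⟨x₀, hx₀⟩ := eventually_atTop.1 ((tendsto_cdf_atTop μ).eventually_const_lt hc)
    exact ⟨x₀, fun x hx => le_of_not_gt fun hxx => (hx₀ x hxx.le).not_ge hx⟩
  have hclosed : IsClosed A := isClosed_le (continuous_cdf μ) continuous_const
  set s := sSup A
  have hs : s ∈ A := hclosed.csSup_mem hA hbdd
  have hAs : A = Iic s := Subset.antisymm (fun x hx => le_csSup hbdd hx)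
    fun x hx => (monotone_cdf μ hx).trans hs
  have hcs : c ≤ cdf μ s := by
    refine ge_of_tendsto
      (((continuous_cdf μ).tendsto s).mono_left (nhdsWithin_le_nhds (s := Ioi s))) ?_
    filter_upwards [self_mem_nhdsWithin] with x (hx : s < x)
    exact le_of_lt (not_le.1 fun h => hx.not_ge (le_csSup hbdd h))
  rw [hAs, ← ofReal_cdf, le_antisymm hs hcs]

theorem map_cdf_self_eq_volume_Ioo : μ.map (cdf μ) = volume.restrict (Ioo 0 1) := by
  refine Measure.ext_of_Iic _ _ fun c => ?_
  rw [Measure.map_apply (monotone_cdf μ).measurable measurableSet_Iic,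
    Measure.restrict_apply' measurableSet_Ioo]
  rcases lt_or_ge c 1 with hc | hc
  · rw [show cdf μ ⁻¹' Iic c = {x | cdf μ x ≤ c} from rfl, measure_cdf_le μ hc, inter_comm,
      Real.volume_Ioo_inter_Iic hc.le]
  · rw [preimage_eq_univ_iff.2 fun _ ⟨x, hx⟩ => hx ▸ (cdf_le_one μ x).trans hc,
      inter_eq_right.2 fun a ha => ha.2.le.trans hc]
    simp

end NullSingleton

end ProbabilityTheory

theorem stmt_5 (μ ν : Measure ℝ) [IsProbabilityMeasure μ] [IsProbabilityMeasure ν]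
    (hna : ∀ x : ℝ, μ {x} = 0)
    (F Q T : ℝ → ℝ)
    (hF : ∀ x, F x = (μ (Iic x)).toReal)
    (hQ : ∀ a, Q a = sInf {τ : ℝ | a ≤ (ν (Iic τ)).toReal})
    (hT : ∀ x, T x = Q (F x)) :
    Measure.map T μ = ν := by
  have : NullSingletonClass μ := ⟨hna⟩
  have hT' : T = quantile ν ∘ cdf μ := funext fun x => by
    simp only [hT, hF, hQ, Function.comp, quantile, cdf_eq_real, measureReal_def]
  have hquantile : AEMeasurable (quantile ν) (μ.map (cdf μ)) := by
    rw [map_cdf_self_eq_volume_Ioo]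
    exact aemeasurable_quantile_volume_Ioo ν
  rw [hT', ← hquantile.map_map_of_aemeasurable (monotone_cdf μ).measurable.aemeasurable,
    map_cdf_self_eq_volume_Ioo, map_quantile_volume_Ioo]
end

section
/- Let μ_1, ..., μ_k be probability measures on [0,1] with weights p_1, ..., p_k ≥ 0 summing to 1, and fix an index j. Define T_i^j = F_{μ_i}⁻¹ ∘ F_{μ_j} and S = Σ_i p_i T_i^j. If μ_j is nonatomic with strictly increasing continuous CDF, then the pushforward β = S_# μ_j has quantile function F_β⁻¹(q) = Σ_i p_i F_{μ_i}⁻¹(q) for almost every q ∈ (0,1). -/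
open MeasureTheory Set

theorem stmt_19 (k : ℕ) (μ : Fin k → Measure ℝ) [∀ i, IsProbabilityMeasure (μ i)]
    (hsupp : ∀ i, μ i (Icc (0:ℝ) 1) = 1)
    (p : Fin k → ℝ) (hp : ∀ i, 0 ≤ p i) (hsum : ∑ i, p i = 1)
    (j : Fin k)
    (F Q : Fin k → ℝ → ℝ)
    (hF : ∀ i x, F i x = ((μ i) (Iic x)).toReal)
    (hQ : ∀ i a, Q i a = sInf {τ : ℝ | a ≤ F i τ})
    (hj : Continuous (F j)) (hjm : StrictMonoOn (F j) (Icc 0 1))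
    (S : ℝ → ℝ) (hS : ∀ x, S x = ∑ i, p i * Q i (F j x)) :
    ∀ᵐ q ∂(volume.restrict (Ioo (0:ℝ) 1)),
      sInf {τ : ℝ | q ≤ ((Measure.map S (μ j)) (Iic τ)).toReal}
        = ∑ i, p i * Q i q := by
  -- Basic facts about the CDFs
  have Fnonneg : ∀ i x, 0 ≤ F i x := fun i x => by rw [hF]; exact ENNReal.toReal_nonneg
  have Fle1 : ∀ i x, F i x ≤ 1 := fun i x => by
    rw [hF]
    exact ENNReal.toReal_le_of_le_ofReal one_pos.le (by simpa using prob_le_one)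
  have Fmono : ∀ i, Monotone (F i) := fun i x y hxy => by
    rw [hF, hF]
    exact ENNReal.toReal_mono (measure_ne_top _ _) (measure_mono (Iic_subset_Iic.2 hxy))
  have hcompl : ∀ i, μ i (Icc (0:ℝ) 1)ᶜ = 0 := fun i => by
    rw [prob_compl_eq_zero_iff measurableSet_Icc]; exact hsupp i
  have Fneg : ∀ i x, x < 0 → F i x = 0 := by
    intro i x hx
    rw [hF]
    have hsub : Iic x ⊆ (Icc (0:ℝ) 1)ᶜ := by
      intro y hy
      simp only [mem_compl_iff, mem_Icc, mem_Iic] at *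
      intro h; linarith [h.1]
    have : μ i (Iic x) = 0 := le_antisymm (le_trans (measure_mono hsub) (hcompl i).le) bot_le
    simp [this]
  have Fone : ∀ i, F i 1 = 1 := by
    intro i
    rw [hF]
    have h1 : μ i (Iic 1) = 1 := by
      refine le_antisymm prob_le_one ?_
      rw [← hsupp i]
      exact measure_mono (fun y hy => hy.2)
    simp [h1]
  have Fj0 : F j 0 = 0 := by
    have h1 : Filter.Tendsto (F j) (nhdsWithin 0 (Iio 0)) (nhds (F j 0)) :=
      ((hj.tendsto 0).mono_left nhdsWithin_le_nhds)
    have h2 : Filter.Tendsto (F j) (nhdsWithin 0 (Iio 0)) (nhds 0) := by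
      refine Filter.Tendsto.congr' ?_ tendsto_const_nhds
      filter_upwards [self_mem_nhdsWithin] with x hx
      exact (Fneg j x hx).symm
    exact tendsto_nhds_unique h1 h2
  -- Facts about quantile functions
  have Qzero : ∀ i a, a ≤ 0 → Q i a = 0 := by
    intro i a ha
    rw [hQ]
    have huniv : {τ : ℝ | a ≤ F i τ} = univ :=
      eq_univ_of_forall fun τ => ha.trans (Fnonneg i τ)
    rw [huniv]
    have hnb : ¬ BddBelow (univ : Set ℝ) := fun ⟨b, hb⟩ => by
      have := hb (mem_univ (b - 1)); linarith
    rw [csInf_of_not_bddBelow hnb, Real.sInf_empty]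
  have Qbdd : ∀ i a, 0 < a → BddBelow {τ : ℝ | a ≤ F i τ} := by
    intro i a ha
    refine ⟨0, fun τ hτ => ?_⟩
    by_contra hτ0
    push_neg at hτ0
    have := Fneg i τ hτ0
    simp only [mem_setOf_eq] at hτ
    linarith
  have Qne : ∀ i a, a ≤ 1 → {τ : ℝ | a ≤ F i τ}.Nonempty :=
    fun i a ha => ⟨1, by simp only [mem_setOf_eq, Fone i]; exact ha⟩
  have Qnonneg : ∀ i a, 0 ≤ Q i a → True := fun _ _ _ => trivial
  have Qnn : ∀ i a, 0 ≤ a → 0 ≤ Q i a := by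
    intro i a ha
    rcases eq_or_lt_of_le ha with h | h
    · rw [← h, Qzero i 0 le_rfl]
    · rw [hQ]
      refine Real.sInf_nonneg fun τ hτ => ?_
      by_contra hτ0
      push_neg at hτ0
      have := Fneg i τ hτ0
      simp only [mem_setOf_eq] at hτ
      linarith
  have Qle1 : ∀ i a, a ≤ 1 → Q i a ≤ 1 := by
    intro i a ha
    rcases le_or_gt a 0 with h | h
    · rw [Qzero i a h]; norm_num
    · rw [hQ]
      exact csInf_le (Qbdd i a h) (by simp only [mem_setOf_eq, Fone i]; exact ha)
  have Qmono : ∀ i, MonotoneOn (Q i) (Icc (0:ℝ) 1) := by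
    intro i a ha b hb hab
    rcases eq_or_lt_of_le ha.1 with h | h
    · rw [← h, Qzero i 0 le_rfl]; exact Qnn i b hb.1
    · rw [hQ, hQ]
      refine csInf_le_csInf (Qbdd i a h) (Qne i b hb.2) fun τ hτ => ?_
      simp only [mem_setOf_eq] at *
      linarith
  -- key: measure of sublevel sets of F j
  have key : ∀ a, a ∈ Ioo (0:ℝ) 1 → μ j {x | F j x ≤ a} = ENNReal.ofReal a := by
    intro a ha
    have hmem : a ∈ Icc (F j 0) (F j 1) := by
      rw [Fj0, Fone]; exact ⟨ha.1.le, ha.2.le⟩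
    obtain ⟨c, hc, hfc⟩ := intermediate_value_Icc (by norm_num : (0:ℝ) ≤ 1) hj.continuousOn hmem
    have hset : {x | F j x ≤ a} = Iic c := by
      ext x
      simp only [mem_setOf_eq, mem_Iic]
      constructor
      · intro hx
        by_contra hxc
        push_neg at hxc
        rcases le_or_gt x 1 with hx1 | hx1
        · have h0x : (0:ℝ) ≤ x := le_trans hc.1 hxc.le
          have := hjm hc ⟨h0x, hx1⟩ hxc
          rw [hfc] at this; linarith
        · have : F j x ≥ F j 1 := Fmono j hx1.le
          rw [Fone j] at this
          linarith [ha.2]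
      · intro hx
        calc F j x ≤ F j c := Fmono j hx
        _ = a := hfc
    rw [hset]
    have : (μ j (Iic c)).toReal = a := by rw [← hF]; rw [hfc]
    rw [← this, ENNReal.ofReal_toReal (measure_ne_top _ _)]
  -- monotonicity and measurability of S
  have hFjmem : ∀ x, F j x ∈ Icc (0:ℝ) 1 := fun x => ⟨Fnonneg j x, Fle1 j x⟩
  have Smono : Monotone S := by
    intro x y hxy
    rw [hS, hS]
    refine Finset.sum_le_sum fun i _ => ?_
    exact mul_le_mul_of_nonneg_left
      (Qmono i (hFjmem x) (hFjmem y) (Fmono j hxy)) (hp i)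
  have Smeas : Measurable S := Smono.measurable
  have Snonneg : ∀ x, 0 ≤ S x := by
    intro x
    rw [hS]
    exact Finset.sum_nonneg fun i _ => mul_nonneg (hp i) (Qnn i _ (Fnonneg j x))
  -- the clamped sum-of-quantiles function
  set G : ℝ → ℝ := fun a => ∑ i, p i * Q i a with hG
  have GmonoOn : MonotoneOn G (Icc (0:ℝ) 1) := by
    intro a ha b hb hab
    exact Finset.sum_le_sum fun i _ =>
      mul_le_mul_of_nonneg_left (Qmono i ha hb hab) (hp i)
  set c : ℝ → ℝ := fun a => max 0 (min a 1) with hc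
  have cmem : ∀ a, c a ∈ Icc (0:ℝ) 1 :=
    fun a => ⟨le_max_left _ _, max_le (by norm_num) (min_le_right _ _)⟩
  have cmono : Monotone c := fun a b hab =>
    max_le_max le_rfl (min_le_min hab le_rfl)
  have ceq : ∀ a ∈ Icc (0:ℝ) 1, c a = a := by
    intro a ha
    simp only [hc]
    rw [min_eq_left ha.2, max_eq_right ha.1]
  set G' : ℝ → ℝ := fun a => G (c a) with hG'
  have G'mono : Monotone G' := fun a b hab =>
    GmonoOn (cmem a) (cmem b) (cmono hab)
  have G'eq : ∀ a ∈ Icc (0:ℝ) 1, G' a = G a := fun a ha => by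
    simp only [hG']; rw [ceq a ha]
  have hSG : ∀ x, S x = G' (F j x) := fun x => by
    rw [hS, G'eq (F j x) (hFjmem x)]
  -- the pushforward measure applied to Iic
  have hmap : ∀ τ, (Measure.map S (μ j)) (Iic τ) = μ j {x | S x ≤ τ} := by
    intro τ
    rw [Measure.map_apply Smeas measurableSet_Iic]
    rfl
  -- a.e. argument
  have hD : {a : ℝ | ¬ ContinuousAt G' a}.Countable := G'mono.countable_not_continuousAt
  have hae : ∀ᵐ q ∂(volume.restrict (Ioo (0:ℝ) 1)), ¬ q ∈ {a : ℝ | ¬ ContinuousAt G' a} :=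
    ae_restrict_of_ae (hD.ae_notMem volume)
  have hmem : ∀ᵐ q ∂(volume.restrict (Ioo (0:ℝ) 1)), q ∈ Ioo (0:ℝ) 1 :=
    ae_restrict_mem measurableSet_Ioo
  filter_upwards [hae, hmem] with q hqc hq
  simp only [mem_setOf_eq, not_not] at hqc
  -- now the pointwise statement for q ∈ (0,1) with G' continuous at q
  set T : Set ℝ := {τ : ℝ | q ≤ ((Measure.map S (μ j)) (Iic τ)).toReal} with hT
  have Tlb : ∀ τ ∈ T, (0:ℝ) ≤ τ := by
    intro τ hτ
    by_contra hτ0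
    push_neg at hτ0
    have hempty : {x | S x ≤ τ} = ∅ := by
      ext x
      simp only [mem_setOf_eq, mem_empty_iff_false, iff_false, not_le]
      exact lt_of_lt_of_le hτ0 (Snonneg x)
    simp only [hT, mem_setOf_eq, hmap, hempty] at hτ
    simp at hτ
    linarith [hq.1]
  have hG'q : G' q = G q := G'eq q ⟨hq.1.le, hq.2.le⟩
  -- upper bound: for every ε > 0 there is an element of T that is ≤ G q + ε
  have hup : ∀ ε : ℝ, 0 < ε → ∃ t ∈ T, t ≤ G q + ε := by
    intro ε hε
    obtain ⟨δ, hδ, hδc⟩ := Metric.continuousAt_iff.1 hqc ε hε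
    set q' : ℝ := min (q + δ / 2) ((q + 1) / 2) with hq'
    have hq'q : q < q' := lt_min (by linarith) (by linarith [hq.2])
    have hq'1 : q' < 1 := lt_of_le_of_lt (min_le_right _ _) (by linarith [hq.2])
    have hq'0 : 0 < q' := lt_trans hq.1 hq'q
    have hdist : dist q' q < δ := by
      rw [Real.dist_eq, abs_lt]
      constructor
      · linarith
      · have : q' ≤ q + δ / 2 := min_le_left _ _
        linarith
    have hGq' : G' q' < G' q + ε := by
      have := hδc hdist
      rw [Real.dist_eq, abs_lt] at this
      linarith [this.2]
    have hG'q' : G' q' = G q' := G'eq q' ⟨hq'0.le, hq'1.le⟩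
    refine ⟨G q', ?_, by rw [← hG'q', ← hG'q]; linarith⟩
    -- show G q' ∈ T
    simp only [hT, mem_setOf_eq, hmap]
    have hsub : {x | F j x ≤ q'} ⊆ {x | S x ≤ G q'} := by
      intro x hx
      simp only [mem_setOf_eq] at *
      rw [hSG, ← hG'q']
      exact G'mono hx
    have hmeas : ENNReal.ofReal q' ≤ μ j {x | S x ≤ G q'} := by
      rw [← key q' ⟨hq'0, hq'1⟩]
      exact measure_mono hsub
    have : q' ≤ (μ j {x | S x ≤ G q'}).toReal := by
      have h1 : (ENNReal.ofReal q').toReal ≤ (μ j {x | S x ≤ G q'}).toReal :=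
        ENNReal.toReal_mono (measure_ne_top _ _) hmeas
      rwa [ENNReal.toReal_ofReal hq'0.le] at h1
    linarith [hq'q]
  have hTne : T.Nonempty := by
    obtain ⟨t, ht, _⟩ := hup 1 one_pos
    exact ⟨t, ht⟩
  have hTbdd : BddBelow T := ⟨0, Tlb⟩
  -- lower bound: G q is a lower bound of T
  have hlow : ∀ τ ∈ T, G q ≤ τ := by
    intro τ hτ
    by_contra hτG
    push_neg at hτG
    obtain ⟨δ, hδ, hδc⟩ := Metric.continuousAt_iff.1 hqc (G q - τ) (by linarith)
    set q'' : ℝ := max (q - δ / 2) (q / 2) with hq''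
    have hq''q : q'' < q := max_lt (by linarith) (by linarith [hq.1])
    have hq''0 : 0 < q'' := lt_of_lt_of_le (by linarith [hq.1]) (le_max_right _ _)
    have hq''1 : q'' < 1 := lt_trans hq''q hq.2
    have hdist : dist q'' q < δ := by
      rw [Real.dist_eq, abs_lt]
      constructor
      · have : q - δ / 2 ≤ q'' := le_max_left _ _
        linarith
      · linarith
    have hGq'' : τ < G' q'' := by
      have := hδc hdist
      rw [Real.dist_eq, abs_lt] at this
      rw [hG'q] at this
      linarith [this.1]
    have hsub : {x | S x ≤ τ} ⊆ {x | F j x ≤ q''} := by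
      intro x hx
      simp only [mem_setOf_eq] at *
      by_contra hxq
      push_neg at hxq
      have : G' q'' ≤ G' (F j x) := G'mono hxq.le
      rw [← hSG] at this
      linarith
    have hmeas : μ j {x | S x ≤ τ} ≤ ENNReal.ofReal q'' := by
      rw [← key q'' ⟨hq''0, hq''1⟩]
      exact measure_mono hsub
    have hle : (μ j {x | S x ≤ τ}).toReal ≤ q'' := by
      have h1 : (μ j {x | S x ≤ τ}).toReal ≤ (ENNReal.ofReal q'').toReal :=
        ENNReal.toReal_mono (by simp) hmeas
      rwa [ENNReal.toReal_ofReal hq''0.le] at h1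
    simp only [hT, mem_setOf_eq, hmap] at hτ
    linarith
  have h1 : sInf T ≤ G q := by
    by_contra hcon
    push_neg at hcon
    obtain ⟨t, ht, htle⟩ := hup ((sInf T - G q) / 2) (by linarith)
    have := csInf_le hTbdd ht
    linarith
  have h2 : G q ≤ sInf T := le_csInf hTne hlow
  exact le_antisymm h1 h2
end
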